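/- Joint minimization form of LD: min over t ∈ {0,...,T−1} and pairs of distributions (Q_1,Q_2) of [(T−t)D(Q_1‖P_A) + (M−2T+t)D(Q_1‖P_N) + (T−t)D(Q_2‖P_N) + t·D(Q_2‖P_A)] equals min over t ∈ {0,...,T−1} of (T−t)·(D_{t/T}(P_A‖P_N) + D_{(M−2T+t)/(M−T)}(P_N‖P_A)). -/

import Mathlib

open Real Finset Filter

open scoped Classical

variable {X : Type*}

def IsProb [Fintype X] (P : X → ℝ) : Prop := (∀ x, 0 ≤ P x) ∧ ∑ x, P x = 1

noncomputable def KL [Fintype X] (P Q : X → ℝ) : ℝ := ∑ x, P x * Real.log (P x / Q x)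

noncomputable def GJS [Fintype X] (P Q : X → ℝ) (α : ℝ) : ℝ :=
  α * KL P (fun x => (α * P x + Q x) / (1 + α)) + KL Q (fun x => (α * P x + Q x) / (1 + α))

noncomputable def Renyi [Fintype X] (β : ℝ) (P Q : X → ℝ) : ℝ :=
  (1 / (β - 1)) * Real.log (∑ x, P x ^ β * Q x ^ (1 - β))

noncomputable def scoreG [Fintype X] {M : ℕ} (Q : Fin M → X → ℝ) (i : Fin M) : ℝ :=
  ∑ j ∈ Finset.univ.erase i,
    KL (Q j) (fun x => (∑ l ∈ Finset.univ.erase i, Q l x) / ((M : ℝ) - 1))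

/-!
For fixed `t` the objective splits into a part in `Q₁` and a part in `Q₂`, each of the form
`a * KL Q P + b * KL Q R`. Against the normalized geometric mixture `W ∝ R ^ β * P ^ (1 - β)`,
`β = b / (a + b)`, this equals `(a + b) * KL Q W + a * D_β(R ‖ P)`, so by Gibbs' inequality its
minimum is `a * D_β(R ‖ P)`, attained at `Q = W`. The minimum over the finitely many `t` then
commutes with the inner minimum.
-/

theorem csInf_exists_eq_of_isLeast {ι α : Type*} [ConditionallyCompleteLinearOrder α]
    {p : ι → Prop} {S : ι → α → Prop} {g : ι → α} (hfin : {i | p i}.Finite) (hne : ∃ i, p i)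
    (h : ∀ i, p i → IsLeast {v | S i v} (g i)) :
    sInf {v | ∃ i, p i ∧ S i v} = sInf {v | ∃ i, p i ∧ v = g i} := by
  obtain ⟨i₀, hi₀, hmin⟩ := Set.exists_min_image {i | p i} g hfin hne
  have hleast_g : IsLeast {v | ∃ i, p i ∧ v = g i} (g i₀) :=
    ⟨⟨i₀, hi₀, rfl⟩, by rintro _ ⟨i, hi, rfl⟩; exact hmin i hi⟩
  have hleast_S : IsLeast {v | ∃ i, p i ∧ S i v} (g i₀) :=
    ⟨⟨i₀, hi₀, (h i₀ hi₀).1⟩, by rintro v ⟨i, hi, hv⟩; exact (hmin i hi).trans ((h i hi).2 hv)⟩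
  rw [hleast_g.csInf_eq, hleast_S.csInf_eq]

section Fintype

open InformationTheory

variable [Fintype X] {P Q R : X → ℝ} {a b : ℝ}

theorem KL_self (P : X → ℝ) : KL P P = 0 :=
  sum_eq_zero fun x _ => by by_cases h : P x = 0 <;> simp [h]

theorem KL_nonneg (hQ : IsProb Q) (hR : IsProb R) (hRpos : ∀ x, 0 < R x) : 0 ≤ KL Q R := by
  have hterm : ∀ x, Q x * log (Q x / R x) = R x * klFun (Q x / R x) + (Q x - R x) := by
    intro x
    have := (hRpos x).ne'
    rw [klFun_apply]
    field_simp
    ring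
  calc 0 ≤ ∑ x, R x * klFun (Q x / R x) :=
        sum_nonneg fun x _ =>
          mul_nonneg (hRpos x).le (klFun_nonneg (div_nonneg (hQ.1 x) (hRpos x).le))
    _ = KL Q R := by
        simp only [KL, hterm, sum_add_distrib, sum_sub_distrib, hQ.2, hR.2, sub_self, add_zero]

-- The minimizer of `(1 - β) * KL Q P + β * KL Q R` over distributions `Q`.
noncomputable def tilted (β : ℝ) (R P : X → ℝ) (x : X) : ℝ :=
  R x ^ β * P x ^ (1 - β) / ∑ y, R y ^ β * P y ^ (1 - β)

theorem tilted_pos (hRpos : ∀ x, 0 < R x) (hPpos : ∀ x, 0 < P x) (β : ℝ) (x : X) :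
    0 < tilted β R P x := by
  have hZ : 0 < ∑ y, R y ^ β * P y ^ (1 - β) :=
    sum_pos (fun y _ => by have := hRpos y; have := hPpos y; positivity) ⟨x, mem_univ x⟩
  have := hRpos x; have := hPpos x
  unfold tilted; positivity

theorem isProb_tilted [Nonempty X] (hRpos : ∀ x, 0 < R x) (hPpos : ∀ x, 0 < P x) (β : ℝ) :
    IsProb (tilted β R P) := by
  refine ⟨fun x => (tilted_pos hRpos hPpos β x).le, ?_⟩
  obtain ⟨x⟩ := ‹Nonempty X›
  have hZ := tilted_pos hRpos hPpos β x
  unfold tilted at hZ ⊢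
  rw [← sum_div, div_self]
  intro h
  simp [h] at hZ

theorem log_tilted (hRpos : ∀ x, 0 < R x) (hPpos : ∀ x, 0 < P x) (β : ℝ) (x : X) :
    log (tilted β R P x) = β * log (R x) + (1 - β) * log (P x)
      - log (∑ y, R y ^ β * P y ^ (1 - β)) := by
  have hZ : 0 < ∑ y, R y ^ β * P y ^ (1 - β) :=
    sum_pos (fun y _ => by have := hRpos y; have := hPpos y; positivity) ⟨x, mem_univ x⟩
  have := hRpos x; have := hPpos x
  rw [tilted, log_div (by positivity) hZ.ne', log_mul (by positivity) (by positivity),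
    log_rpow (hRpos x), log_rpow (hPpos x)]

theorem weighted_KL_eq (hRpos : ∀ x, 0 < R x) (hPpos : ∀ x, 0 < P x) (hQ : IsProb Q)
    (ha : a ≠ 0) (hab : a + b ≠ 0) :
    a * KL Q P + b * KL Q R
      = (a + b) * KL Q (tilted (b / (a + b)) R P) + a * Renyi (b / (a + b)) R P := by
  set β := b / (a + b)
  set L := log (∑ y, R y ^ β * P y ^ (1 - β))
  have hβ : (a + b) * β = b := mul_div_cancel₀ b hab
  have hcoef : 1 / (β - 1) * a = -(a + b) := by
    have hβ1 : β - 1 = -a / (a + b) := by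
      simp only [β]
      field_simp
      ring
    rw [hβ1]
    field_simp
  clear_value β
  have hconst : a * Renyi β R P = ∑ x, Q x * (-(a + b) * L) := by
    rw [← sum_mul, hQ.2, Renyi, ← hcoef]
    ring
  simp only [KL, hconst, mul_sum, ← sum_add_distrib]
  refine sum_congr rfl fun x _ => ?_
  rcases (hQ.1 x).eq_or_lt with hx | hx
  · simp [← hx]
  rw [log_div hx.ne' (hPpos x).ne', log_div hx.ne' (hRpos x).ne',
    log_div hx.ne' (tilted_pos hRpos hPpos β x).ne', log_tilted hRpos hPpos]
  linear_combination Q x * (log (R x) - log (P x)) * hβ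

theorem isLeast_weighted_KL [Nonempty X] (hRpos : ∀ x, 0 < R x) (hPpos : ∀ x, 0 < P x)
    (ha : 0 < a) (hb : 0 ≤ b) :
    IsLeast ((fun Q => a * KL Q P + b * KL Q R) '' {Q | IsProb Q})
      (a * Renyi (b / (a + b)) R P) := by
  have hab : 0 < a + b := by linarith
  have hW := isProb_tilted hRpos hPpos (b / (a + b))
  refine ⟨⟨_, hW, ?_⟩, ?_⟩
  · dsimp only
    rw [weighted_KL_eq hRpos hPpos hW ha.ne' hab.ne', KL_self, mul_zero, zero_add]
  · rintro _ ⟨Q, hQ, rfl⟩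
    dsimp only
    rw [weighted_KL_eq hRpos hPpos hQ ha.ne' hab.ne']
    exact le_add_of_nonneg_left (mul_nonneg hab.le (KL_nonneg hQ hW (tilted_pos hRpos hPpos _)))

theorem isLeast_two_weighted_KL [Nonempty X] (hPpos : ∀ x, 0 < P x) (hRpos : ∀ x, 0 < R x)
    {c : ℝ} (ha : 0 < a) (hb : 0 ≤ b) (hc : 0 ≤ c) :
    IsLeast {v | ∃ Q₁ Q₂ : X → ℝ, IsProb Q₁ ∧ IsProb Q₂ ∧
        v = a * KL Q₁ P + b * KL Q₁ R + a * KL Q₂ R + c * KL Q₂ P}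
      (a * (Renyi (c / (a + c)) P R + Renyi (b / (a + b)) R P)) := by
  obtain ⟨⟨Q₁, hQ₁, h₁⟩, hlb₁⟩ := isLeast_weighted_KL hRpos hPpos ha hb
  obtain ⟨⟨Q₂, hQ₂, h₂⟩, hlb₂⟩ := isLeast_weighted_KL hPpos hRpos ha hc
  refine ⟨⟨Q₁, Q₂, hQ₁, hQ₂, by simp only at h₁ h₂; linarith⟩, ?_⟩
  rintro _ ⟨Q₁', Q₂', hQ₁', hQ₂', rfl⟩
  have := hlb₁ ⟨Q₁', hQ₁', rfl⟩
  have := hlb₂ ⟨Q₂', hQ₂', rfl⟩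
  linarith

end Fintype

theorem LD_joint_min_general [Fintype X] (PN PA : X → ℝ) (hPN : IsProb PN)
    (hPNpos : ∀ x, 0 < PN x) (hPApos : ∀ x, 0 < PA x)
    (T : ℕ) (hT : 1 ≤ T) (M : ℕ) (hM : 2 * T < M) :
    sInf {v : ℝ | ∃ t : ℕ, t < T ∧ ∃ Q₁ Q₂ : X → ℝ, IsProb Q₁ ∧ IsProb Q₂ ∧
        v = ((T : ℝ) - t) * KL Q₁ PA + ((M : ℝ) - 2 * T + t) * KL Q₁ PN
          + ((T : ℝ) - t) * KL Q₂ PN + (t : ℝ) * KL Q₂ PA}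
      = sInf {v : ℝ | ∃ t : ℕ, t < T ∧
        v = ((T : ℝ) - t) * (Renyi ((t : ℝ) / T) PA PN
            + Renyi (((M : ℝ) - 2 * T + t) / ((M : ℝ) - T)) PN PA)} := by
  have : Nonempty X := by
    by_contra h
    simpa [not_nonempty_iff.mp h] using hPN.2
  refine csInf_exists_eq_of_isLeast (Set.finite_lt_nat T) ⟨0, hT⟩ fun t ht => ?_
  have hM' : (2 * T : ℝ) < M := by exact_mod_cast hM
  have ha : (0 : ℝ) < T - t := sub_pos.mpr (by exact_mod_cast ht)
  have hb : (0 : ℝ) ≤ M - 2 * T + t := by positivity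
  have h := isLeast_two_weighted_KL hPApos hPNpos ha hb (Nat.cast_nonneg t)
  rwa [sub_add_cancel, show (T : ℝ) - t + (M - 2 * T + t) = M - T by ring] at h

theorem LD_joint_min [Fintype X] (PN PA : X → ℝ) (hPN : IsProb PN) (hPA : IsProb PA)
    (hPNpos : ∀ x, 0 < PN x) (hPApos : ∀ x, 0 < PA x)
    (T : ℕ) (hT : 1 ≤ T) (M : ℕ) (hM : 2 * T < M) :
    sInf {v : ℝ | ∃ t : ℕ, t < T ∧ ∃ Q₁ Q₂ : X → ℝ, IsProb Q₁ ∧ IsProb Q₂ ∧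
        v = ((T : ℝ) - t) * KL Q₁ PA + ((M : ℝ) - 2 * T + t) * KL Q₁ PN
          + ((T : ℝ) - t) * KL Q₂ PN + (t : ℝ) * KL Q₂ PA}
      = sInf {v : ℝ | ∃ t : ℕ, t < T ∧
        v = ((T : ℝ) - t) * (Renyi ((t : ℝ) / T) PA PN
            + Renyi (((M : ℝ) - 2 * T + t) / ((M : ℝ) - T)) PN PA)} :=
  LD_joint_min_general PN PA hPN hPNpos hPApos T hT M hM
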